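/- Let (A,{·,·,·}) be a 3-pre-Lie algebra over a field k. Define the commutator c(x,y,z) := ∑_{σ ∈ S3} sgn(σ) {x_{σ(1)},x_{σ(2)},x_{σ(3)}} (the sum over all six permutations of the arguments with signs). Then c(x,y,z) = 2·([x,y,z]) where [x,y,z] := {x,y,z} + {y,z,x} + {z,x,y}, and (A,c) is a 3-Lie algebra. -/
import Mathlib


/-- The cyclic sum `○{x,y,z} = {x,y,z} + {y,z,x} + {z,x,y}` of a ternary operation. -/
def cyc3 {A : Type*} [AddCommGroup A] (f : A → A → A → A) : A → A → A → A :=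
  fun x y z => f x y z + f y z x + f z x y

/-- The full (signed) commutator `∑_{σ ∈ S₃} sgn(σ) f(x_{σ(1)}, x_{σ(2)}, x_{σ(3)})`
of a ternary operation. -/
def comm3 {A : Type*} [AddCommGroup A] (f : A → A → A → A) : A → A → A → A :=
  fun x y z =>
    ∑ σ : Equiv.Perm (Fin 3),
      (Equiv.Perm.sign σ : ℤ) • f (![x, y, z] (σ 0)) (![x, y, z] (σ 1)) (![x, y, z] (σ 2))

/-- A ternary operation is skew-symmetric:
`f(x_{σ(1)}, x_{σ(2)}, x_{σ(3)}) = sgn(σ) f(x₁, x₂, x₃)` for every permutation `σ`. -/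
def Skew3 {A : Type*} [AddCommGroup A] (f : A → A → A → A) : Prop :=
  ∀ (σ : Equiv.Perm (Fin 3)) (x : Fin 3 → A),
    f (x (σ 0)) (x (σ 1)) (x (σ 2)) = (Equiv.Perm.sign σ : ℤ) • f (x 0) (x 1) (x 2)

/-- A 3-Lie algebra structure: skew-symmetry plus the 3-Jacobi identity. -/
def Lie3 {A : Type*} [AddCommGroup A] (f : A → A → A → A) : Prop :=
  Skew3 f ∧
  ∀ x1 x2 x3 x4 x5 : A,
    f (f x1 x2 x3) x4 x5 =
      f (f x1 x4 x5) x2 x3 + f x1 (f x2 x4 x5) x3 + f x1 x2 (f x3 x4 x5)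

/-- The defining relations of a 3-pre-Lie algebra. -/
def PreLie3 {A : Type*} [AddCommGroup A] (f : A → A → A → A) : Prop :=
  (∀ x1 x2 x3 : A, f x1 x2 x3 = - f x1 x3 x2) ∧
  (∀ x1 x2 x3 x4 x5 : A,
    f (f x1 x2 x3) x4 x5 =
      f (f x1 x4 x5) x2 x3 + f x1 (cyc3 f x2 x4 x5) x3 + f x1 x2 (cyc3 f x3 x4 x5)) ∧
  (∀ x1 x2 x3 x4 x5 : A,
    f x4 (cyc3 f x1 x2 x3) x5 =
      f (f x4 x1 x5) x2 x3 + f (f x4 x2 x5) x3 x1 + f (f x4 x3 x5) x1 x2)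


private lemma comm3_expand {A : Type*} [AddCommGroup A] (f : A → A → A → A) (x y z : A) :
    comm3 f x y z = f x y z - f x z y - f y x z + f y z x + f z x y - f z y x := by
  show (∑ σ : Equiv.Perm (Fin 3),
      (Equiv.Perm.sign σ : ℤ) • f (![x, y, z] (σ 0)) (![x, y, z] (σ 1)) (![x, y, z] (σ 2))) = _
  rw [show (Finset.univ : Finset (Equiv.Perm (Fin 3))) = {1, Equiv.swap 0 1, Equiv.swap 0 2,
      Equiv.swap 1 2, Equiv.swap 0 1 * Equiv.swap 1 2, Equiv.swap 1 2 * Equiv.swap 0 1} from by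
    decide]
  rw [Finset.sum_insert (by decide), Finset.sum_insert (by decide), Finset.sum_insert (by decide),
      Finset.sum_insert (by decide), Finset.sum_insert (by decide), Finset.sum_singleton]
  have e1 : ∀ i : Fin 3, (1 : Equiv.Perm (Fin 3)) i = ![0,1,2] i := by decide
  have e2 : ∀ i : Fin 3, (Equiv.swap (0:Fin 3) 1) i = ![1,0,2] i := by decide
  have e3 : ∀ i : Fin 3, (Equiv.swap (0:Fin 3) 2) i = ![2,1,0] i := by decide
  have e4 : ∀ i : Fin 3, (Equiv.swap (1:Fin 3) 2) i = ![0,2,1] i := by decide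
  have e5 : ∀ i : Fin 3, ((Equiv.swap (0:Fin 3) 1 * Equiv.swap 1 2 : Equiv.Perm (Fin 3))) i
      = ![1,2,0] i := by decide
  have e6 : ∀ i : Fin 3, ((Equiv.swap (1:Fin 3) 2 * Equiv.swap 0 1 : Equiv.Perm (Fin 3))) i
      = ![2,0,1] i := by decide
  have s1 : (Equiv.Perm.sign (1 : Equiv.Perm (Fin 3)) : ℤ) = 1 := by decide
  have s2 : (Equiv.Perm.sign (Equiv.swap (0:Fin 3) 1) : ℤ) = -1 := by decide
  have s3 : (Equiv.Perm.sign (Equiv.swap (0:Fin 3) 2) : ℤ) = -1 := by decide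
  have s4 : (Equiv.Perm.sign (Equiv.swap (1:Fin 3) 2) : ℤ) = -1 := by decide
  have s5 : (Equiv.Perm.sign (Equiv.swap (0:Fin 3) 1 * Equiv.swap 1 2) : ℤ) = 1 := by decide
  have s6 : (Equiv.Perm.sign (Equiv.swap (1:Fin 3) 2 * Equiv.swap 0 1) : ℤ) = 1 := by decide
  rw [e1, e1, e1, e2, e2, e2, e3, e3, e3, e4, e4, e4, e5, e5, e5, e6, e6, e6,
      s1, s2, s3, s4, s5, s6]
  simp only [Matrix.cons_val_zero, Matrix.cons_val_one, Matrix.head_cons, Matrix.cons_val_two,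
    Matrix.tail_cons]
  simp only [one_smul, neg_smul]
  abel

set_option maxHeartbeats 2000000 in
/-- For a 3-pre-Lie algebra `(A, {·,·,·})` over a field `k`, the full signed
commutator `c` satisfies `c(x,y,z) = 2·[x,y,z]` where `[x,y,z] = {x,y,z}+{y,z,x}+{z,x,y}`,
and `(A, c)` is a 3-Lie algebra. -/
theorem preLie3_commutator_lie3 {k A : Type*} [Field k] [AddCommGroup A] [Module k A]
    (f : A →ₗ[k] A →ₗ[k] A →ₗ[k] A)
    (h : PreLie3 (fun x y z => f x y z)) :
    (∀ x y z : A,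
      comm3 (fun x y z => f x y z) x y z = (2 : ℤ) • cyc3 (fun x y z => f x y z) x y z) ∧
    Lie3 (comm3 (fun x y z => f x y z)) := by
  have h1 : ∀ a b c : A, f a b c = - f a c b := h.1
  have hsw1 : ∀ p q r d e : A, f (f p q r) d e = -(f (f p r q) d e) := by
    intro p q r d e; rw [h1 p q r]; simp
  have hsw2 : ∀ a p q r c : A, f a (f p q r) c = -(f a (f p r q) c) := by
    intro a p q r c; rw [h1 p q r]; simp
  have hsw3 : ∀ a b p q r : A, f a b (f p q r) = -(f a b (f p r q)) := by
    intro a b p q r; rw [h1 p q r]; simp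
  have h2 : ∀ a b c d e : A, f (f a b c) d e =
      f (f a d e) b c + (f a (f b d e) c + f a (f d e b) c + f a (f e b d) c)
      + (f a b (f c d e) + f a b (f d e c) + f a b (f e c d)) := by
    intro a b c d e
    have t := h.2.1 a b c d e
    simp only [cyc3, map_add, LinearMap.add_apply] at t
    linear_combination (norm := module) t
  have h3 : ∀ a b c d e : A,
      f d (f a b c) e + f d (f b c a) e + f d (f c a b) e =
      f (f d a e) b c + f (f d b e) c a + f (f d c e) a b := by
    intro a b c d e
    have t := h.2.2 a b c d e
    simp only [cyc3, map_add, LinearMap.add_apply] at t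
    linear_combination (norm := module) t
  have hc : ∀ x y z : A,
      comm3 (fun x y z => f x y z) x y z = (2 : ℤ) • cyc3 (fun x y z => f x y z) x y z := by
    intro a b c
    rw [comm3_expand]
    show f a b c - f a c b - f b a c + f b c a + f c a b - f c b a
        = (2 : ℤ) • (f a b c + f b c a + f c a b)
    rw [h1 a c b, h1 b a c, h1 c b a]
    abel
  refine ⟨hc, ?_, ?_⟩
  · -- Skew3
    intro σ x
    have hcol : ∀ g : Fin 3 → A, ![g 0, g 1, g 2] = g := by
      intro g; funext i; fin_cases i <;> rfl
    show (∑ τ : Equiv.Perm (Fin 3), (Equiv.Perm.sign τ : ℤ) •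
        f (![x (σ 0), x (σ 1), x (σ 2)] (τ 0)) (![x (σ 0), x (σ 1), x (σ 2)] (τ 1))
          (![x (σ 0), x (σ 1), x (σ 2)] (τ 2)))
      = (Equiv.Perm.sign σ : ℤ) • ∑ τ : Equiv.Perm (Fin 3), (Equiv.Perm.sign τ : ℤ) •
        f (![x 0, x 1, x 2] (τ 0)) (![x 0, x 1, x 2] (τ 1)) (![x 0, x 1, x 2] (τ 2))
    have e1 : (![x (σ 0), x (σ 1), x (σ 2)] : Fin 3 → A) = fun i => x (σ i) :=
      hcol (fun i => x (σ i))
    have e2 : (![x 0, x 1, x 2] : Fin 3 → A) = x := hcol x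
    rw [e1, e2, Finset.smul_sum]
    refine Fintype.sum_equiv (Equiv.mulLeft σ) _ _ (fun τ => ?_)
    simp only [Equiv.coe_mulLeft, Equiv.Perm.mul_apply, map_mul, smul_smul, Units.val_mul]
    rw [← mul_assoc, show ((Equiv.Perm.sign σ : ℤ) * (Equiv.Perm.sign σ : ℤ)) = 1 by
      rcases Int.units_eq_one_or (Equiv.Perm.sign σ) with hs | hs <;> rw [hs] <;> rfl, one_mul]
  · -- 3-Jacobi
    intro x1 x2 x3 x4 x5
    simp only [comm3_expand]
    simp only [map_add, map_sub, LinearMap.add_apply, LinearMap.sub_apply]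
    linear_combination (norm := module)
      (4:ℤ) • (h2 x1 x2 x3 x4 x5) - (4:ℤ) • (h3 x1 x2 x3 x4 x5) + (4:ℤ) • (h3 x1 x2 x3 x5 x4) - (4:ℤ) • (h2 x2 x1 x3 x4 x5) + (4:ℤ) • (h2 x3 x1 x2 x4 x5) - (hsw1 x1 x3 x2 x4 x5) + (hsw1 x2 x3 x1 x4 x5) - (hsw1 x3 x2 x1 x4 x5) - (2:ℤ) • (h1 (f x1 x2 x3) x5 x4) + (hsw1 x1 x3 x2 x5 x4) + (2:ℤ) • (h1 (f x2 x1 x3) x5 x4) - (hsw1 x2 x3 x1 x5 x4) - (2:ℤ) • (h1 (f x3 x1 x2) x5 x4) + (hsw1 x3 x2 x1 x5 x4) + (2:ℤ) • (hsw2 x4 x1 x3 x2 x5) + (2:ℤ) • (hsw2 x4 x2 x3 x1 x5) + (2:ℤ) • (hsw2 x4 x3 x2 x1 x5) + (h1 x4 x5 (f x1 x2 x3)) - (h1 x4 x5 (f x1 x3 x2)) - (h1 x4 x5 (f x2 x1 x3)) + (h1 x4 x5 (f x2 x3 x1)) + (h1 x4 x5 (f x3 x1 x2)) - (h1 x4 x5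 (f x3 x2 x1)) - (2:ℤ) • (hsw2 x5 x1 x3 x2 x4) - (2:ℤ) • (hsw2 x5 x2 x3 x1 x4) - (2:ℤ) • (hsw2 x5 x3 x2 x1 x4) - (h1 x5 x4 (f x1 x2 x3)) + (h1 x5 x4 (f x1 x3 x2)) + (h1 x5 x4 (f x2 x1 x3)) - (h1 x5 x4 (f x2 x3 x1)) - (h1 x5 x4 (f x3 x1 x2)) + (h1 x5 x4 (f x3 x2 x1)) + (hsw1 x1 x5 x4 x2 x3) - (hsw1 x4 x5 x1 x2 x3) + (hsw1 x5 x4 x1 x2 x3) + (2:ℤ) • (h1 (f x1 x4 x5) x3 x2) - (hsw1 x1 x5 x4 x3 x2) - (2:ℤ) • (h1 (f x4 x1 x5) x3 x2) + (hsw1 x4 x5 x1 x3 x2) + (2:ℤ) • (h1 (f x5 x1 x4) x3 x2) - (hsw1 x5 x4 x1 x3 x2) - (2:ℤ) • (hsw2 x2 x1 x5 x4 x3) - (2:ℤ) • (hsw2 x2 x4 x5 x1 x3) - (2:ℤ) • (hsw2 x2 x5 x4 x1 x3) - (h1 x2 x3 (f x1 x4 x5)) + (h1 x2 x3 (f x1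 x5 x4)) + (h1 x2 x3 (f x4 x1 x5)) - (h1 x2 x3 (f x4 x5 x1)) - (h1 x2 x3 (f x5 x1 x4)) + (h1 x2 x3 (f x5 x4 x1)) + (2:ℤ) • (hsw2 x3 x1 x5 x4 x2) + (2:ℤ) • (hsw2 x3 x4 x5 x1 x2) + (2:ℤ) • (hsw2 x3 x5 x4 x1 x2) + (h1 x3 x2 (f x1 x4 x5)) - (h1 x3 x2 (f x1 x5 x4)) - (h1 x3 x2 (f x4 x1 x5)) + (h1 x3 x2 (f x4 x5 x1)) + (h1 x3 x2 (f x5 x1 x4)) - (h1 x3 x2 (f x5 x4 x1)) + (2:ℤ) • (hsw2 x1 x2 x5 x4 x3) + (2:ℤ) • (hsw2 x1 x4 x5 x2 x3) + (2:ℤ) • (hsw2 x1 x5 x4 x2 x3) + (h1 x1 x3 (f x2 x4 x5)) - (h1 x1 x3 (f x2 x5 x4)) - (h1 x1 x3 (f x4 x2 x5)) + (h1 x1 x3 (f x4 x5 x2)) + (h1 x1 x3 (f x5 x2 x4)) - (h1 x1 x3 (f x5 x4 x2)) - (hsw1 x2 x5 x4 x1 x3) + (hsw1 x4 x5 x2 x1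 x3) - (hsw1 x5 x4 x2 x1 x3) - (2:ℤ) • (h1 (f x2 x4 x5) x3 x1) + (hsw1 x2 x5 x4 x3 x1) - (2:ℤ) • (h1 (f x4 x2 x5) x3 x1) - (hsw1 x4 x5 x2 x3 x1) + (2:ℤ) • (h1 (f x5 x2 x4) x3 x1) + (hsw1 x5 x4 x2 x3 x1) + (3:ℤ) • (h1 x3 x1 (f x2 x4 x5)) + (h1 x3 x1 (f x2 x5 x4)) - (2:ℤ) • (hsw2 x3 x2 x5 x4 x1) + (h1 x3 x1 (f x4 x2 x5)) + (3:ℤ) • (h1 x3 x1 (f x4 x5 x2)) - (2:ℤ) • (hsw2 x3 x4 x5 x2 x1) + (3:ℤ) • (h1 x3 x1 (f x5 x2 x4)) + (h1 x3 x1 (f x5 x4 x2)) - (2:ℤ) • (hsw2 x3 x5 x4 x2 x1) + (3:ℤ) • (h1 x1 x2 (f x3 x4 x5)) + (h1 x1 x2 (f x3 x5 x4)) - (2:ℤ) • (hsw2 x1 x3 x5 x4 x2) + (h1 x1 x2 (f x4 x3 x5)) + (3:ℤ) • (h1 x1 x2 (f x4 x5 x3)) - (2:ℤ) • (hsw2 x1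 x4 x5 x3 x2) + (3:ℤ) • (h1 x1 x2 (f x5 x3 x4)) + (h1 x1 x2 (f x5 x4 x3)) - (2:ℤ) • (hsw2 x1 x5 x4 x3 x2) - (3:ℤ) • (h1 x2 x1 (f x3 x4 x5)) - (h1 x2 x1 (f x3 x5 x4)) + (2:ℤ) • (hsw2 x2 x3 x5 x4 x1) - (h1 x2 x1 (f x4 x3 x5)) - (3:ℤ) • (h1 x2 x1 (f x4 x5 x3)) + (2:ℤ) • (hsw2 x2 x4 x5 x3 x1) - (3:ℤ) • (h1 x2 x1 (f x5 x3 x4)) - (h1 x2 x1 (f x5 x4 x3)) + (2:ℤ) • (hsw2 x2 x5 x4 x3 x1) + (hsw1 x3 x5 x4 x1 x2) - (hsw1 x4 x5 x3 x1 x2) + (hsw1 x5 x4 x3 x1 x2) + (2:ℤ) • (h1 (f x3 x4 x5) x2 x1) - (hsw1 x3 x5 x4 x2 x1) - (2:ℤ) • (h1 (f x4 x3 x5) x2 x1) + (hsw1 x4 x5 x3 x2 x1) + (2:ℤ) • (h1 (f x5 x3 x4) x2 x1) - (hsw1 x5 x4 x3 x2 x1)
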